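/- Let Γ be a simple graph on a finite vertex set V, let s, t ∈ V be distinct vertices not adjacent in Γ, and let Γ ∪ e be Γ with the edge e = (s, t) added. If ℓ is a maximal clique of Γ that is not contained in any set of the form (ℓ_s ∩ ℓ_t) ∪ {s, t}, where ℓ_s and ℓ_t are maximal cliques of Γ with s ∈ ℓ_s and t ∈ ℓ_t, then ℓ is a maximal clique of Γ ∪ e. -/

import Mathlib

/-!
A clique `d ⊇ ℓ` of `Γ ⊔ edge s t` missing `s` or `t` is a clique of `Γ`, hence equals `ℓ`.
If it contains both, then `d \ {t}` and `d \ {s}` are cliques of `Γ`; extending them to maximal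
cliques `ℓs ∋ s`, `ℓt ∋ t` gives `ℓ ⊆ d ⊆ (ℓs ∩ ℓt) ∪ {s, t}`, which is excluded.
-/

/-- A maximal clique of a simple graph: a clique not properly contained in any other clique. -/
def IsMaxClique {V : Type*} (G : SimpleGraph V) (c : Set V) : Prop :=
  G.IsClique c ∧ ∀ d : Set V, G.IsClique d → c ⊆ d → c = d

theorem isMaxClique_iff_maximal {V : Type*} {G : SimpleGraph V} {c : Set V} :
    IsMaxClique G c ↔ Maximal G.IsClique c :=
  ⟨fun h ↦ ⟨h.1, fun d hd hcd ↦ (h.2 d hd hcd).symm.subset⟩,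
    fun h ↦ ⟨h.1, fun _ hd hcd ↦ hcd.antisymm (h.2 hd hcd)⟩⟩

namespace SimpleGraph

variable {V : Type*} {G : SimpleGraph V} {s t : V} {d : Set V}

theorem IsClique.exists_isMaxClique_superset (hd : G.IsClique d) :
    ∃ m, d ⊆ m ∧ IsMaxClique G m := by
  obtain ⟨m, hdm, hm⟩ := zorn_subset_nonempty {c | G.IsClique c}
    (fun C hC hchain _ ↦ ⟨⋃₀ C, (isClique_sUnion hchain.directedOn).2 hC,
      fun _ ↦ Set.subset_sUnion_of_mem⟩) d hd
  exact ⟨m, hdm, isMaxClique_iff_maximal.2 hm⟩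

theorem IsClique.of_sup_edge (hd : (G ⊔ edge s t).IsClique d) (hst : ¬(s ∈ d ∧ t ∈ d)) :
    G.IsClique d := by
  rcases not_and_or.1 hst with hs | ht
  · rw [← Set.sdiff_singleton_eq_self hs]
    exact hd.sdiff_of_sup_edge
  · rw [← Set.sdiff_singleton_eq_self ht]
    exact (edge_comm s t ▸ hd).sdiff_of_sup_edge

theorem IsClique.exists_isMaxClique_of_sup_edge (hst : s ≠ t) (hd : (G ⊔ edge s t).IsClique d)
    (hs : s ∈ d) (ht : t ∈ d) :
    ∃ ℓs ℓt, IsMaxClique G ℓs ∧ IsMaxClique G ℓt ∧ s ∈ ℓs ∧ t ∈ ℓt ∧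
      d ⊆ (ℓs ∩ ℓt) ∪ {s, t} := by
  obtain ⟨ℓs, hdℓs, hℓs⟩ := (edge_comm s t ▸ hd).sdiff_of_sup_edge.exists_isMaxClique_superset
  obtain ⟨ℓt, hdℓt, hℓt⟩ := hd.sdiff_of_sup_edge.exists_isMaxClique_superset
  refine ⟨ℓs, ℓt, hℓs, hℓt, hdℓs ⟨hs, hst⟩, hdℓt ⟨ht, hst.symm⟩, fun x hx ↦ ?_⟩
  by_cases hxs : x = s
  · exact .inr (.inl hxs)
  by_cases hxt : x = t
  · exact .inr (.inr hxt)
  exact .inl ⟨hdℓs ⟨hx, hxt⟩, hdℓt ⟨hx, hxs⟩⟩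

end SimpleGraph

theorem statement_13_general {V : Type*} (Γ : SimpleGraph V) (s t : V) (hst : s ≠ t)
    (ℓ : Set V) (hℓ : IsMaxClique Γ ℓ)
    (hnot : ∀ ℓs ℓt : Set V, IsMaxClique Γ ℓs → IsMaxClique Γ ℓt → s ∈ ℓs → t ∈ ℓt →
      ¬ ℓ ⊆ (ℓs ∩ ℓt) ∪ {s, t}) :
    IsMaxClique (Γ ⊔ SimpleGraph.edge s t) ℓ := by
  refine ⟨hℓ.1.mono le_sup_left, fun d hd hℓd ↦ ?_⟩
  by_cases hsd : s ∈ d ∧ t ∈ d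
  · obtain ⟨ℓs, ℓt, hℓs, hℓt, hsℓs, htℓt, hdsub⟩ :=
      hd.exists_isMaxClique_of_sup_edge hst hsd.1 hsd.2
    exact absurd (hℓd.trans hdsub) (hnot ℓs ℓt hℓs hℓt hsℓs htℓt)
  · exact hℓ.2 d (hd.of_sup_edge hsd) hℓd

/-- If `ℓ` is a maximal clique of `Γ` not contained in any set of the form
`(ℓs ∩ ℓt) ∪ {s, t}` with `ℓs ∋ s`, `ℓt ∋ t` maximal cliques of `Γ`, then `ℓ` is a
maximal clique of `Γ ∪ e`. -/
theorem statement_13 {V : Type*} [Fintype V] (Γ : SimpleGraph V) (s t : V) (hst : s ≠ t)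
    (hadj : ¬ Γ.Adj s t) (ℓ : Set V) (hℓ : IsMaxClique Γ ℓ)
    (hnot : ∀ ℓs ℓt : Set V, IsMaxClique Γ ℓs → IsMaxClique Γ ℓt → s ∈ ℓs → t ∈ ℓt →
      ¬ ℓ ⊆ (ℓs ∩ ℓt) ∪ {s, t}) :
    IsMaxClique (Γ ⊔ SimpleGraph.edge s t) ℓ :=
  statement_13_general Γ s t hst ℓ hℓ hnot
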